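/- arXiv:1107.1345 — 4 statements merged into one kernel-verified Lean document; each statement's English description precedes it below -/
import Mathlib

section
/- Let f₁, f₂ : [−π, π] → (n×n complex matrices) be continuous functions whose values are Hermitian positive definite at every θ, and define D₁(f₁, f₂) := (1/2π) ∫_{−π}^{π} tr( f₂(θ)⁻¹ f₁(θ) + f₁(θ)⁻¹ f₂(θ) − 2I ) dθ (a real number). Then D₁(f₁, f₂) ≥ 0, and D₁(f₁, f₂) = 0 if and only if f₁(θ) = f₂(θ) for all θ ∈ [−π, π]. -/
/-!
Write `C = f₁ θ - f₂ θ`. Pointwise, the integrand is `tr (C f₂⁻¹ C f₁⁻¹)`, the matrix form of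
`x + x⁻¹ - 2 = (x - 1)² / x`; with `R = √(f₂⁻¹)` and `T = √(f₁⁻¹)` it equals the squared
Frobenius norm of `R C T`, hence is nonnegative and vanishes exactly when `C = 0`. A continuous
nonnegative function on `[-π, π]` with zero integral vanishes identically.
-/

open Matrix Set
open scoped ComplexOrder

/-- Frobenius (Hilbert–Schmidt) norm of a complex matrix. -/
noncomputable def frob {n : ℕ} (M : Matrix (Fin n) (Fin n) ℂ) : ℝ :=
  Real.sqrt (M * Mᴴ).trace.re

/-- The (Hermitian positive definite) square root of a Hermitian positive definite
matrix, via the continuous functional calculus. -/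
noncomputable def msqrt {n : ℕ} (A : Matrix (Fin n) (Fin n) ℂ) : Matrix (Fin n) (Fin n) ℂ :=
  cfc Real.sqrt A

/-- `A^{-1/2}`, the inverse of the Hermitian square root. -/
noncomputable def minvsqrt {n : ℕ} (A : Matrix (Fin n) (Fin n) ℂ) : Matrix (Fin n) (Fin n) ℂ :=
  (msqrt A)⁻¹

/-- The unique Hermitian logarithm of a Hermitian positive definite matrix. -/
noncomputable def mlog {n : ℕ} (A : Matrix (Fin n) (Fin n) ℂ) : Matrix (Fin n) (Fin n) ℂ :=
  cfc Real.log A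

/-- Real power `A^t` of a Hermitian positive definite matrix, via the functional calculus. -/
noncomputable def mpow {n : ℕ} (A : Matrix (Fin n) (Fin n) ℂ) (t : ℝ) :
    Matrix (Fin n) (Fin n) ℂ :=
  cfc (fun x : ℝ => x ^ t) A

/-- The divergence `D₁` between two matrix-valued spectral densities. -/
noncomputable def D1 {n : ℕ} (f₁ f₂ : ℝ → Matrix (Fin n) (Fin n) ℂ) : ℝ :=
  (1 / (2 * Real.pi)) *
    ∫ θ in (-Real.pi)..Real.pi,
      ((f₂ θ)⁻¹ * f₁ θ + (f₁ θ)⁻¹ * f₂ θ - (2 : ℂ) • 1).trace.re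

open MeasureTheory

namespace Matrix

variable {n : Type*} [Fintype n] [DecidableEq n]

lemma trace_inv_mul_add_inv_mul_sub_two {R : Type*} [CommRing R] {A B : Matrix n n R}
    (hA : IsUnit A.det) (hB : IsUnit B.det) :
    (B⁻¹ * A + A⁻¹ * B - (2 : R) • 1).trace = ((A - B) * B⁻¹ * (A - B) * A⁻¹).trace := by
  have expand : (A - B) * B⁻¹ * (A - B) * A⁻¹ = A * B⁻¹ + B * A⁻¹ - (2 : R) • 1 := calc
    (A - B) * B⁻¹ * (A - B) * A⁻¹ = A * B⁻¹ * (A * A⁻¹) - A * (B⁻¹ * B) * A⁻¹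
        - B * B⁻¹ * (A * A⁻¹) + B * (B⁻¹ * B) * A⁻¹ := by noncomm_ring
    _ = A * B⁻¹ + B * A⁻¹ - (2 : R) • 1 := by
        simp only [nonsing_inv_mul B hB, mul_nonsing_inv B hB, mul_nonsing_inv A hA,
          Matrix.mul_one, two_smul]
        abel
  rw [expand, trace_sub, trace_sub, trace_add, trace_add, trace_mul_comm B⁻¹, trace_mul_comm A⁻¹]

variable {𝕜 : Type*} [RCLike 𝕜]

open scoped MatrixOrder

lemma IsHermitian.trace_mul_mul_mul_eq_trace_conjTranspose_mul_self {C P Q : Matrix n n 𝕜}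
    (hC : C.IsHermitian) (hP : P.PosSemidef) (hQ : Q.PosSemidef) :
    (C * P * C * Q).trace
      = ((CFC.sqrt P * C * CFC.sqrt Q)ᴴ * (CFC.sqrt P * C * CFC.sqrt Q)).trace := by
  have hR : (CFC.sqrt P)ᴴ = CFC.sqrt P := (CFC.sqrt_nonneg P).isSelfAdjoint.star_eq
  have hT : (CFC.sqrt Q)ᴴ = CFC.sqrt Q := (CFC.sqrt_nonneg Q).isSelfAdjoint.star_eq
  rw [conjTranspose_mul, conjTranspose_mul, hR, hT, hC.eq]
  conv_lhs => rw [← CFC.sqrt_mul_sqrt_self P hP.nonneg, ← CFC.sqrt_mul_sqrt_self Q hQ.nonneg]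
  rw [← Matrix.mul_assoc, trace_mul_comm]
  simp only [Matrix.mul_assoc]

lemma IsHermitian.trace_mul_mul_mul_nonneg {C P Q : Matrix n n 𝕜} (hC : C.IsHermitian)
    (hP : P.PosSemidef) (hQ : Q.PosSemidef) : 0 ≤ (C * P * C * Q).trace := by
  rw [hC.trace_mul_mul_mul_eq_trace_conjTranspose_mul_self hP hQ]
  exact (posSemidef_conjTranspose_mul_self _).trace_nonneg

lemma IsHermitian.trace_mul_mul_mul_eq_zero_iff {C P Q : Matrix n n 𝕜} (hC : C.IsHermitian)
    (hP : P.PosDef) (hQ : Q.PosDef) : (C * P * C * Q).trace = 0 ↔ C = 0 := by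
  rw [hC.trace_mul_mul_mul_eq_trace_conjTranspose_mul_self hP.posSemidef hQ.posSemidef,
    trace_conjTranspose_mul_self_eq_zero_iff]
  refine ⟨fun hX => ?_, fun hC0 => by simp [hC0]⟩
  have hPCQ : P * C * Q = 0 := by
    rw [← CFC.sqrt_mul_sqrt_self P hP.posSemidef.nonneg,
      ← CFC.sqrt_mul_sqrt_self Q hQ.posSemidef.nonneg]
    calc CFC.sqrt P * CFC.sqrt P * C * (CFC.sqrt Q * CFC.sqrt Q)
        = CFC.sqrt P * (CFC.sqrt P * C * CFC.sqrt Q) * CFC.sqrt Q := by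
          simp only [Matrix.mul_assoc]
      _ = 0 := by rw [hX, Matrix.mul_zero, Matrix.zero_mul]
  calc C = P⁻¹ * (P * C * Q) * Q⁻¹ := by
        rw [Matrix.mul_assoc P C Q, nonsing_inv_mul_cancel_left P _ hP.det_pos.ne'.isUnit,
          mul_nonsing_inv_cancel_right Q _ hQ.det_pos.ne'.isUnit]
    _ = 0 := by rw [hPCQ, Matrix.mul_zero, Matrix.zero_mul]

lemma PosDef.trace_inv_mul_add_inv_mul_sub_two_nonneg {A B : Matrix n n 𝕜} (hA : A.PosDef)
    (hB : B.PosDef) : 0 ≤ (B⁻¹ * A + A⁻¹ * B - (2 : 𝕜) • 1).trace := by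
  rw [trace_inv_mul_add_inv_mul_sub_two hA.det_pos.ne'.isUnit hB.det_pos.ne'.isUnit]
  exact (hA.1.sub hB.1).trace_mul_mul_mul_nonneg hB.inv.posSemidef hA.inv.posSemidef

lemma PosDef.trace_inv_mul_add_inv_mul_sub_two_eq_zero_iff {A B : Matrix n n 𝕜} (hA : A.PosDef)
    (hB : B.PosDef) : (B⁻¹ * A + A⁻¹ * B - (2 : 𝕜) • 1).trace = 0 ↔ A = B := by
  rw [trace_inv_mul_add_inv_mul_sub_two hA.det_pos.ne'.isUnit hB.det_pos.ne'.isUnit,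
    (hA.1.sub hB.1).trace_mul_mul_mul_eq_zero_iff hB.inv hA.inv, sub_eq_zero]

end Matrix

lemma RCLike.re_eq_zero_iff_of_nonneg {K : Type*} [RCLike K] {z : K} (hz : 0 ≤ z) :
    re z = 0 ↔ z = 0 := by
  obtain ⟨x, -, rfl⟩ := RCLike.nonneg_iff_exists_ofReal.mp hz
  simp

lemma ContinuousOn.matrix_inv {X K n : Type*} [TopologicalSpace X] [Field K] [TopologicalSpace K]
    [IsTopologicalDivisionRing K] [Fintype n] [DecidableEq n] {f : X → Matrix n n K} {s : Set X}
    (hf : ContinuousOn f s) (hdet : ∀ x ∈ s, (f x).det ≠ 0) :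
    ContinuousOn (fun x => (f x)⁻¹) s := fun x hx =>
  (continuousAt_matrix_inv _ (by rw [Ring.inverse_eq_inv']; exact continuousAt_inv₀ (hdet x hx))
    ).comp_continuousWithinAt (hf x hx)

lemma intervalIntegral.integral_eq_zero_iff_of_nonneg_of_continuousOn {f : ℝ → ℝ} {a b : ℝ}
    (hab : a < b) (hf : ContinuousOn f (Icc a b)) (hf₀ : ∀ x ∈ Icc a b, 0 ≤ f x) :
    ∫ x in a..b, f x = 0 ↔ EqOn f 0 (Icc a b) := by
  have hIoc : volume.restrict (Ioc a b) = volume.restrict (Icc a b) :=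
    Measure.restrict_congr_set Ioc_ae_eq_Icc
  have hf₀_ae : 0 ≤ᵐ[volume.restrict (Ioc a b)] f := by
    rw [hIoc]; exact (ae_restrict_mem measurableSet_Icc).mono hf₀
  rw [integral_eq_zero_iff_of_le_of_nonneg_ae hab.le hf₀_ae (hf.intervalIntegrable_of_Icc hab.le),
    hIoc]
  exact ⟨fun h => Measure.eqOn_Icc_of_ae_eq volume hab.ne h hf continuousOn_const,
    fun h => (ae_restrict_mem measurableSet_Icc).mono h⟩

theorem D1_nonneg_and_eq_zero_iff {n : ℕ} (f₁ f₂ : ℝ → Matrix (Fin n) (Fin n) ℂ)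
    (hc₁ : ContinuousOn f₁ (Set.Icc (-Real.pi) Real.pi))
    (hc₂ : ContinuousOn f₂ (Set.Icc (-Real.pi) Real.pi))
    (hp₁ : ∀ θ ∈ Set.Icc (-Real.pi) Real.pi, (f₁ θ).PosDef)
    (hp₂ : ∀ θ ∈ Set.Icc (-Real.pi) Real.pi, (f₂ θ).PosDef) :
    0 ≤ D1 f₁ f₂ ∧
    (D1 f₁ f₂ = 0 ↔ ∀ θ ∈ Set.Icc (-Real.pi) Real.pi, f₁ θ = f₂ θ) := by
  set g : ℝ → ℝ := fun θ => ((f₂ θ)⁻¹ * f₁ θ + (f₁ θ)⁻¹ * f₂ θ - (2 : ℂ) • 1).trace.re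
  have hg_nonneg : ∀ θ ∈ Icc (-Real.pi) Real.pi, 0 ≤ g θ := fun θ hθ =>
    (RCLike.nonneg_iff.mp ((hp₁ θ hθ).trace_inv_mul_add_inv_mul_sub_two_nonneg (hp₂ θ hθ))).1
  have hg_eq_zero : ∀ θ ∈ Icc (-Real.pi) Real.pi, g θ = 0 ↔ f₁ θ = f₂ θ := fun θ hθ =>
    (RCLike.re_eq_zero_iff_of_nonneg
      ((hp₁ θ hθ).trace_inv_mul_add_inv_mul_sub_two_nonneg (hp₂ θ hθ))).trans
      ((hp₁ θ hθ).trace_inv_mul_add_inv_mul_sub_two_eq_zero_iff (hp₂ θ hθ))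
  have hg_cont : ContinuousOn g (Icc (-Real.pi) Real.pi) := by
    have hinv₁ := hc₁.matrix_inv fun θ hθ => (hp₁ θ hθ).det_pos.ne'
    have hinv₂ := hc₂.matrix_inv fun θ hθ => (hp₂ θ hθ).det_pos.ne'
    exact Complex.continuous_re.comp_continuousOn <| continuous_id.matrix_trace.comp_continuousOn
      (((hinv₂.mul hc₁).add (hinv₁.mul hc₂)).sub continuousOn_const)
  have hpi : -Real.pi < Real.pi := neg_lt_self Real.pi_pos
  have hfactor : 0 < 1 / (2 * Real.pi) := by positivity
  refine ⟨mul_nonneg hfactor.le (intervalIntegral.integral_nonneg hpi.le hg_nonneg), ?_⟩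
  rw [D1, mul_eq_zero, or_iff_right hfactor.ne',
    intervalIntegral.integral_eq_zero_iff_of_nonneg_of_continuousOn hpi hg_cont hg_nonneg]
  exact ⟨fun h θ hθ => (hg_eq_zero θ hθ).1 (h hθ), fun h θ hθ => (hg_eq_zero θ hθ).2 (h θ hθ)⟩
end

section
/- Let f, Δ : [−π, π] → (n×n complex matrices) be continuous, with f(θ) Hermitian positive definite and Δ(θ) Hermitian for every θ. Define D₁(f, h) := (1/2π) ∫_{−π}^{π} tr( h⁻¹ f + f⁻¹ h − 2I ) dθ and g₁,f(Δ) := (1/2π) ∫_{−π}^{π} ‖f(θ)^{-1/2} Δ(θ) f(θ)^{-1/2}‖_Fr² dθ. Then there exist constants C > 0 and ε₀ > 0 such that for all 0 < ε < ε₀, f + εΔ is pointwise Hermitian positive definite and | D₁(f, f + εΔ) − ε² g₁,f(Δ) | ≤ C ε³. -/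
open Matrix Set
open scoped ComplexOrder

/-! Write `A = f θ` and `E = ε • Δ θ`. By the resolvent identity
`A⁻¹ - (A + E)⁻¹ = A⁻¹ E (A + E)⁻¹`, the integrand of `D1 f (f + εΔ)` is exactly
`tr ((A⁻¹E)²) - tr ((A⁻¹E)² (A + E)⁻¹E)`, and `tr ((A⁻¹Δ)²) = ‖A^{-1/2} Δ A^{-1/2}‖²_Fr` since
`A^{-1/2} A^{-1/2} = A⁻¹`. Hence `D1 f (f + εΔ) - ε² g₁,f(Δ)` is `-ε³` times the mean over `θ` of
a function that is jointly continuous in `(ε, θ)`, hence bounded, on a compact rectangle on which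
`f + εΔ` stays invertible. Such a rectangle exists because the quadratic form of `f θ` is bounded
below by some `m > 0`, and that of `Δ θ` is bounded, uniformly on the compact set
`[-π, π] × (unit sphere)`. -/

open Real

variable {ι : Type*} [Fintype ι]

namespace Matrix

theorem inv_add_mul_add_inv_mul_add_sub_two [DecidableEq ι] {α : Type*} [CommRing α]
    {A E : Matrix ι ι α} (hA : IsUnit A) (hAE : IsUnit (A + E)) :
    (A + E)⁻¹ * A + A⁻¹ * (A + E) - (2 : α) • 1
      = (A⁻¹ * E) ^ 2 - (A⁻¹ * E) ^ 2 * ((A + E)⁻¹ * E) := by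
  have h₁ : (A + E)⁻¹ * (A + E) = 1 := nonsing_inv_mul _ ((isUnit_iff_isUnit_det _).mp hAE)
  have h₂ : A⁻¹ * A = 1 := nonsing_inv_mul _ ((isUnit_iff_isUnit_det _).mp hA)
  have hres : A⁻¹ - (A + E)⁻¹ = A⁻¹ * E * (A + E)⁻¹ := by
    rw [inv_sub_inv (iff_of_true hA hAE), add_sub_cancel_left]
  rw [two_smul]
  linear_combination (norm := noncomm_ring) h₁ + h₂ + hres * E - A⁻¹ * E * hres * E


theorem re_trace_inv_add_smul_mul_add_inv_mul_add_smul_sub_two [DecidableEq ι]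
    {A Δ : Matrix ι ι ℂ} {ε : ℝ} (hA : IsUnit A) (hAε : IsUnit (A + (ε : ℂ) • Δ)) :
    ((A + (ε : ℂ) • Δ)⁻¹ * A + A⁻¹ * (A + (ε : ℂ) • Δ) - (2 : ℂ) • 1).trace.re
      = ε ^ 2 * ((A⁻¹ * Δ) ^ 2).trace.re
        - ε ^ 3 * ((A⁻¹ * Δ) ^ 2 * ((A + (ε : ℂ) • Δ)⁻¹ * Δ)).trace.re := by
  rw [inv_add_mul_add_inv_mul_add_sub_two hA hAε]
  simp only [mul_smul_comm, smul_mul_assoc, smul_pow, smul_smul, trace_sub, trace_smul,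
    smul_eq_mul, Complex.sub_re, ← Complex.ofReal_pow, ← Complex.ofReal_mul, Complex.re_ofReal_mul]
  ring

section PositiveDefinite

variable {𝕜 : Type*} [RCLike 𝕜]

theorem re_star_smul_dotProduct_mulVec_smul (M : Matrix ι ι 𝕜) (c : 𝕜) (u : ι → 𝕜) :
    RCLike.re (star (c • u) ⬝ᵥ M *ᵥ (c • u)) = ‖c‖ ^ 2 * RCLike.re (star u ⬝ᵥ M *ᵥ u) := by
  rw [star_smul, smul_dotProduct, mulVec_smul, dotProduct_smul, smul_smul, smul_eq_mul,
    RCLike.star_def, RCLike.conj_mul, ← RCLike.ofReal_pow, RCLike.re_ofReal_mul]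

theorem posDef_of_forall_norm_eq_one {M : Matrix ι ι 𝕜} (hM : M.IsHermitian)
    (h : ∀ u : ι → 𝕜, ‖u‖ = 1 → 0 < RCLike.re (star u ⬝ᵥ M *ᵥ u)) : M.PosDef := by
  refine PosDef.of_dotProduct_mulVec_pos hM fun x hx =>
    RCLike.pos_iff.mpr ⟨?_, hM.im_star_dotProduct_mulVec_self x⟩
  have hx' : 0 < ‖x‖ := norm_pos_iff.mpr hx
  set c : 𝕜 := (‖x‖ : 𝕜)
  have hc : c ≠ 0 := RCLike.ofReal_ne_zero.mpr hx'.ne'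
  have hu : ‖c⁻¹ • x‖ = 1 := by
    rw [norm_smul, norm_inv, RCLike.norm_ofReal, abs_norm, inv_mul_cancel₀ hx'.ne']
  rw [← smul_inv_smul₀ hc x, re_star_smul_dotProduct_mulVec_smul]
  exact mul_pos (pow_pos (norm_pos_iff.mpr hc) 2) (h _ hu)

theorem _root_.IsCompact.exists_posDef_add_smul {X : Type*} [TopologicalSpace X] {K : Set X}
    (hK : IsCompact K) {F G : X → Matrix ι ι 𝕜} (hF : ContinuousOn F K) (hG : ContinuousOn G K)
    (hFpos : ∀ x ∈ K, (F x).PosDef) (hGherm : ∀ x ∈ K, (G x).IsHermitian) :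
    ∃ δ > 0, ∀ ε : ℝ, |ε| ≤ δ → ∀ x ∈ K, (F x + (ε : 𝕜) • G x).PosDef := by
  set S := Metric.sphere (0 : ι → 𝕜) 1
  have hKS : IsCompact (K ×ˢ S) := hK.prod (isCompact_sphere 0 1)
  have hquad : ∀ H : X → Matrix ι ι 𝕜, ContinuousOn H K →
      ContinuousOn (fun p : X × (ι → 𝕜) => RCLike.re (star p.2 ⬝ᵥ H p.1 *ᵥ p.2)) (K ×ˢ S) := by
    intro H hH
    have hform : Continuous fun q : Matrix ι ι 𝕜 × (ι → 𝕜) =>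
        RCLike.re (star q.2 ⬝ᵥ q.1 *ᵥ q.2) := by fun_prop
    have hpair : ContinuousOn (fun p : X × (ι → 𝕜) => (H p.1, p.2)) (K ×ˢ S) :=
      (hH.comp continuousOn_fst mapsTo_fst_prod).prodMk continuousOn_snd
    exact (hform.comp_continuousOn hpair :)
  obtain ⟨m, hm, hmF⟩ := hKS.exists_forall_le' (hquad F hF) (a := 0) fun p hp =>
    (hFpos p.1 hp.1).re_dotProduct_pos (ne_zero_of_mem_unit_sphere ⟨p.2, hp.2⟩)
  obtain ⟨M, hMG⟩ := hKS.exists_bound_of_continuousOn (hquad G hG)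
  obtain ⟨δ, hδ, hδM⟩ := exists_pos_mul_lt hm M
  refine ⟨δ, hδ, fun ε hε x hx => posDef_of_forall_norm_eq_one
    ((hFpos x hx).1.add ((hGherm x hx).smul (RCLike.conj_ofReal ε))) fun u hu => ?_⟩
  have hp : (x, u) ∈ K ×ˢ S := ⟨hx, mem_sphere_zero_iff_norm.mpr hu⟩
  have hperturb : |ε * RCLike.re (star u ⬝ᵥ G x *ᵥ u)| ≤ δ * M := by
    rw [abs_mul]
    exact mul_le_mul hε (hMG _ hp) (abs_nonneg _) hδ.le
  rw [add_mulVec, dotProduct_add, smul_mulVec, dotProduct_smul, map_add, smul_eq_mul,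
    RCLike.re_ofReal_mul]
  linarith [hmF _ hp, neg_abs_le (ε * RCLike.re (star u ⬝ᵥ G x *ᵥ u))]

end PositiveDefinite

end Matrix

theorem ContinuousOn.matrix_inv_s4 [DecidableEq ι] {𝕜 X : Type*} [Field 𝕜] [TopologicalSpace 𝕜]
    [IsTopologicalRing 𝕜] [ContinuousInv₀ 𝕜] [TopologicalSpace X] {s : Set X}
    {A : X → Matrix ι ι 𝕜} (hA : ContinuousOn A s) (h : ∀ x ∈ s, IsUnit (A x)) :
    ContinuousOn (fun x => (A x)⁻¹) s := fun x hx =>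
  (continuousAt_matrix_inv _ <| by
    rw [Ring.inverse_eq_inv']
    exact continuousAt_inv₀ ((isUnit_iff_isUnit_det _).mp (h x hx)).ne_zero
  ).comp_continuousWithinAt (hA x hx)

section SquareRoot

variable {n : ℕ} {A : Matrix (Fin n) (Fin n) ℂ}

theorem msqrt_mul_self (hA : A.PosDef) : msqrt A * msqrt A = A := by
  rw [msqrt, ← cfc_mul Real.sqrt Real.sqrt A]
  conv_rhs => rw [← cfc_id ℝ A hA.1.isSelfAdjoint]
  refine cfc_congr fun x hx => ?_
  rw [hA.1.spectrum_real_eq_range_eigenvalues] at hx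
  obtain ⟨i, rfl⟩ := hx
  exact Real.mul_self_sqrt (hA.eigenvalues_pos i).le

theorem isHermitian_minvsqrt : (minvsqrt A).IsHermitian :=
  IsHermitian.inv (cfc_predicate Real.sqrt A)

theorem minvsqrt_mul_self (hA : A.PosDef) : minvsqrt A * minvsqrt A = A⁻¹ := by
  rw [minvsqrt, ← Matrix.mul_inv_rev, msqrt_mul_self hA]

theorem frob_sq_of_isHermitian {M : Matrix (Fin n) (Fin n) ℂ} (hM : M.IsHermitian) :
    frob M ^ 2 = (M * M).trace.re := by
  have hnonneg := (Complex.nonneg_iff.mp (posSemidef_self_mul_conjTranspose M).trace_nonneg).1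
  rw [frob, Real.sq_sqrt hnonneg, hM.eq]

theorem frob_minvsqrt_mul_mul_minvsqrt_sq (hA : A.PosDef) {Δ : Matrix (Fin n) (Fin n) ℂ}
    (hΔ : Δ.IsHermitian) :
    frob (minvsqrt A * Δ * minvsqrt A) ^ 2 = ((A⁻¹ * Δ) ^ 2).trace.re := by
  set Q := minvsqrt A
  have hQ : (Q * Δ * Q).IsHermitian := by
    have h := isHermitian_mul_mul_conjTranspose Q hΔ
    rwa [show Qᴴ = Q from isHermitian_minvsqrt] at h
  rw [frob_sq_of_isHermitian hQ, ← minvsqrt_mul_self hA, sq]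
  congr 1
  calc (Q * Δ * Q * (Q * Δ * Q)).trace = (Q * (Δ * Q * Q * Δ * Q)).trace := by
        simp only [Matrix.mul_assoc]
    _ = (Δ * Q * Q * Δ * Q * Q).trace := trace_mul_comm _ _
    _ = (Δ * (Q * Q * Δ * Q * Q)).trace := by simp only [Matrix.mul_assoc]
    _ = (Q * Q * Δ * Q * Q * Δ).trace := trace_mul_comm _ _
    _ = (Q * Q * Δ * (Q * Q * Δ)).trace := by simp only [Matrix.mul_assoc]

end SquareRoot

theorem abs_inv_sub_mul_integral_le {a b C : ℝ} {φ : ℝ → ℝ} (hab : a < b)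
    (h : ∀ x ∈ Ioc a b, |φ x| ≤ C) : |(b - a)⁻¹ * ∫ x in a..b, φ x| ≤ C := by
  have hba : 0 < b - a := sub_pos.mpr hab
  have hint := intervalIntegral.norm_integral_le_of_norm_le_const (f := φ) (C := C)
    (by rwa [uIoc_of_le hab.le])
  rw [Real.norm_eq_abs, abs_of_pos hba] at hint
  rw [abs_mul, abs_inv, abs_of_pos hba, inv_mul_le_iff₀ hba, mul_comm]
  exact hint

section D1

variable {n : ℕ} {f Δ : ℝ → Matrix (Fin n) (Fin n) ℂ}

noncomputable def D1Remainder (f Δ : ℝ → Matrix (Fin n) (Fin n) ℂ) (ε θ : ℝ) : ℝ :=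
  (((f θ)⁻¹ * Δ θ) ^ 2 * ((f θ + (ε : ℂ) • Δ θ)⁻¹ * Δ θ)).trace.re

theorem continuousOn_D1Remainder {I J : Set ℝ} (hcf : ContinuousOn f I)
    (hcΔ : ContinuousOn Δ I) (hf : ∀ θ ∈ I, IsUnit (f θ))
    (hfε : ∀ ε ∈ J, ∀ θ ∈ I, IsUnit (f θ + (ε : ℂ) • Δ θ)) :
    ContinuousOn (Function.uncurry (D1Remainder f Δ)) (J ×ˢ I) := by
  have hf' : ContinuousOn (fun p : ℝ × ℝ => f p.2) (J ×ˢ I) :=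
    hcf.comp continuousOn_snd mapsTo_snd_prod
  have hΔ' : ContinuousOn (fun p : ℝ × ℝ => Δ p.2) (J ×ˢ I) :=
    hcΔ.comp continuousOn_snd mapsTo_snd_prod
  have hfε' : ContinuousOn (fun p : ℝ × ℝ => f p.2 + (p.1 : ℂ) • Δ p.2) (J ×ˢ I) :=
    hf'.add ((Complex.continuous_ofReal.comp continuous_fst).continuousOn.smul hΔ')
  have hfinv := hf'.matrix_inv_s4 fun p hp => hf p.2 hp.2
  have hfεinv := hfε'.matrix_inv_s4 fun p hp => hfε p.1 hp.1 p.2 hp.2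
  unfold D1Remainder Function.uncurry
  fun_prop

theorem D1_add_smul_eq {ε : ℝ} (hcf : ContinuousOn f (Icc (-π) π))
    (hcΔ : ContinuousOn Δ (Icc (-π) π)) (hpf : ∀ θ ∈ Icc (-π) π, (f θ).PosDef)
    (hΔ : ∀ θ ∈ Icc (-π) π, (Δ θ).IsHermitian)
    (hfε : ∀ θ ∈ Icc (-π) π, IsUnit (f θ + (ε : ℂ) • Δ θ)) :
    D1 f (fun θ => f θ + (ε : ℂ) • Δ θ)
      = ε ^ 2 * ((1 / (2 * π)) * ∫ θ in (-π)..π,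
          (frob (minvsqrt (f θ) * Δ θ * minvsqrt (f θ))) ^ 2)
        - ε ^ 3 * ((1 / (2 * π)) * ∫ θ in (-π)..π, D1Remainder f Δ ε θ) := by
  have huIcc : uIcc (-π) π = Icc (-π) π := uIcc_of_le (by linarith [pi_pos])
  have hf : ∀ θ ∈ Icc (-π) π, IsUnit (f θ) := fun θ hθ => (hpf θ hθ).isUnit
  have hg : ∀ θ ∈ Icc (-π) π, frob (minvsqrt (f θ) * Δ θ * minvsqrt (f θ)) ^ 2
      = (((f θ)⁻¹ * Δ θ) ^ 2).trace.re := fun θ hθ =>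
    frob_minvsqrt_mul_mul_minvsqrt_sq (hpf θ hθ) (hΔ θ hθ)
  have hg_cont : ContinuousOn (fun θ => frob (minvsqrt (f θ) * Δ θ * minvsqrt (f θ)) ^ 2)
      (Icc (-π) π) := by
    have hfinv := hcf.matrix_inv_s4 hf
    refine ContinuousOn.congr ?_ hg
    fun_prop
  have hR_cont : ContinuousOn (D1Remainder f Δ ε) (Icc (-π) π) :=
    ((continuousOn_D1Remainder hcf hcΔ hf (J := {ε}) (by simpa using hfε)).comp
      (Continuous.prodMk_right ε).continuousOn fun θ hθ => ⟨rfl, hθ⟩ :)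
  have hexp : ∀ θ ∈ uIcc (-π) π,
      ((f θ + (ε : ℂ) • Δ θ)⁻¹ * f θ + (f θ)⁻¹ * (f θ + (ε : ℂ) • Δ θ) - (2 : ℂ) • 1).trace.re
        = ε ^ 2 * frob (minvsqrt (f θ) * Δ θ * minvsqrt (f θ)) ^ 2
          - ε ^ 3 * D1Remainder f Δ ε θ := by
    intro θ hθ
    rw [huIcc] at hθ
    rw [hg θ hθ, re_trace_inv_add_smul_mul_add_inv_mul_add_smul_sub_two (hf θ hθ) (hfε θ hθ),
      D1Remainder]
  rw [D1, intervalIntegral.integral_congr hexp, intervalIntegral.integral_sub,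
    intervalIntegral.integral_const_mul, intervalIntegral.integral_const_mul]
  · ring
  · exact (hg_cont.mono huIcc.subset).intervalIntegrable.const_mul _
  · exact (hR_cont.mono huIcc.subset).intervalIntegrable.const_mul _

end D1

theorem D1_second_order_expansion {n : ℕ} (f Δ : ℝ → Matrix (Fin n) (Fin n) ℂ)
    (hcf : ContinuousOn f (Set.Icc (-Real.pi) Real.pi))
    (hcΔ : ContinuousOn Δ (Set.Icc (-Real.pi) Real.pi))
    (hpf : ∀ θ ∈ Set.Icc (-Real.pi) Real.pi, (f θ).PosDef)
    (hΔ : ∀ θ ∈ Set.Icc (-Real.pi) Real.pi, (Δ θ).IsHermitian) :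
    ∃ C > (0 : ℝ), ∃ ε₀ > (0 : ℝ), ∀ ε : ℝ, 0 < ε → ε < ε₀ →
      (∀ θ ∈ Set.Icc (-Real.pi) Real.pi, (f θ + (ε : ℂ) • Δ θ).PosDef) ∧
      |D1 f (fun θ => f θ + (ε : ℂ) • Δ θ) -
          ε ^ 2 * ((1 / (2 * Real.pi)) * ∫ θ in (-Real.pi)..Real.pi,
            (frob (minvsqrt (f θ) * Δ θ * minvsqrt (f θ))) ^ 2)|
        ≤ C * ε ^ 3 := by
  obtain ⟨δ, hδ, hpos⟩ := isCompact_Icc.exists_posDef_add_smul hcf hcΔ hpf hΔ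
  have hunit : ∀ ε ∈ Icc 0 δ, ∀ θ ∈ Icc (-π) π, IsUnit (f θ + (ε : ℂ) • Δ θ) :=
    fun ε hε θ hθ => (hpos ε (abs_le.mpr ⟨by linarith [hε.1], hε.2⟩) θ hθ).isUnit
  obtain ⟨C, hC⟩ := (isCompact_Icc.prod isCompact_Icc).exists_bound_of_continuousOn
    (continuousOn_D1Remainder hcf hcΔ (fun θ hθ => (hpf θ hθ).isUnit) hunit)
  refine ⟨max C 1, by positivity, δ, hδ, fun ε hε hεδ => ⟨fun θ hθ =>
    hpos ε (by rw [abs_of_pos hε]; exact hεδ.le) θ hθ, ?_⟩⟩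
  have hεδ' : ε ∈ Icc 0 δ := ⟨hε.le, hεδ.le⟩
  rw [D1_add_smul_eq hcf hcΔ hpf hΔ (hunit ε hεδ'), sub_sub_cancel_left, abs_neg, abs_mul,
    abs_of_pos (by positivity), mul_comm]
  gcongr
  rw [show 2 * π = π - -π by ring, one_div]
  exact abs_inv_sub_mul_integral_le (by linarith [pi_pos]) fun θ hθ =>
    (hC (ε, θ) ⟨hεδ', hθ.1.le, hθ.2⟩).trans (le_max_left _ _)
end

section
/- Let M₀ and M₁ be n×n Hermitian positive definite complex matrices and define M₀ ♯_τ M₁ := M₀^{1/2} (M₀^{-1/2} M₁ M₀^{-1/2})^τ M₀^{1/2} for τ ∈ [0,1]. Then d_g(M₀, M₀ ♯_τ M₁) = τ · d_g(M₀, M₁) for every τ ∈ [0,1], where d_g(A, B) := ‖log(A^{-1/2} B A^{-1/2})‖_Fr. -/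
open Matrix Set
open scoped ComplexOrder

/-- The geodesic distance `d_g(A,B) = ‖log(A^{-1/2} B A^{-1/2})‖_Fr` on Hermitian
positive definite matrices. -/
noncomputable def dg {n : ℕ} (A B : Matrix (Fin n) (Fin n) ℂ) : ℝ :=
  frob (mlog (minvsqrt A * B * minvsqrt A))

/-- The geodesic `A ♯_τ B = A^{1/2} (A^{-1/2} B A^{-1/2})^τ A^{1/2}`. -/
noncomputable def sharp {n : ℕ} (A B : Matrix (Fin n) (Fin n) ℂ) (τ : ℝ) :
    Matrix (Fin n) (Fin n) ℂ :=
  msqrt A * mpow (minvsqrt A * B * minvsqrt A) τ * msqrt A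

/-! Conjugating by `A^{-1/2}` turns `A ♯_τ B` into `C^τ` with `C = A^{-1/2} B A^{-1/2}`, and the
functional calculus gives `log (C^τ) = τ • log C`; the Frobenius norm is absolutely homogeneous. -/

namespace Matrix

lemma PosDef.spectrum_real_subset_Ioi {ι 𝕜 : Type*} [Fintype ι] [DecidableEq ι] [RCLike 𝕜]
    {A : Matrix ι ι 𝕜} (hA : A.PosDef) : spectrum ℝ A ⊆ Ioi 0 := by
  rw [hA.1.spectrum_real_eq_range_eigenvalues]
  rintro _ ⟨i, rfl⟩
  exact hA.eigenvalues_pos i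

variable {n : ℕ}

lemma isHermitian_minvsqrt (A : Matrix (Fin n) (Fin n) ℂ) : (minvsqrt A).IsHermitian :=
  IsHermitian.inv (cfc_predicate Real.sqrt A)

lemma PosDef.isUnit_msqrt {A : Matrix (Fin n) (Fin n) ℂ} (hA : A.PosDef) : IsUnit (msqrt A) := by
  have hsp := hA.spectrum_real_subset_Ioi
  rw [msqrt, isUnit_cfc_iff Real.sqrt A Real.continuous_sqrt.continuousOn hA.1.isSelfAdjoint]
  exact fun x hx => (Real.sqrt_pos.mpr (hsp hx)).ne'

lemma PosDef.minvsqrt_mul_mul_minvsqrt {A B : Matrix (Fin n) (Fin n) ℂ} (hA : A.PosDef)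
    (hB : B.PosDef) : (minvsqrt A * B * minvsqrt A).PosDef := by
  have hQ : IsUnit (minvsqrt A) := isUnit_nonsing_inv_iff.mpr hA.isUnit_msqrt
  have := (IsUnit.posDef_star_left_conjugate_iff hQ).mpr hB
  rwa [star_eq_conjTranspose, (isHermitian_minvsqrt A).eq] at this

lemma PosDef.minvsqrt_mul_sharp_mul_minvsqrt {A : Matrix (Fin n) (Fin n) ℂ} (hA : A.PosDef)
    (B : Matrix (Fin n) (Fin n) ℂ) (τ : ℝ) :
    minvsqrt A * sharp A B τ * minvsqrt A = mpow (minvsqrt A * B * minvsqrt A) τ := by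
  have hdet : IsUnit (msqrt A).det := (isUnit_iff_isUnit_det _).mp hA.isUnit_msqrt
  rw [sharp, minvsqrt]
  simp only [← Matrix.mul_assoc, nonsing_inv_mul _ hdet, Matrix.one_mul]
  rw [Matrix.mul_assoc, mul_nonsing_inv _ hdet, Matrix.mul_one]

lemma PosDef.mlog_mpow {A : Matrix (Fin n) (Fin n) ℂ} (hA : A.PosDef) (τ : ℝ) :
    mlog (mpow A τ) = τ • mlog A := by
  have hsp := hA.spectrum_real_subset_Ioi
  have hpow : ContinuousOn (fun x : ℝ => x ^ τ) (spectrum ℝ A) := fun x hx =>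
    (Real.continuousAt_rpow_const x τ (Or.inl (hsp hx).ne')).continuousWithinAt
  have hlog : ContinuousOn Real.log (spectrum ℝ A) :=
    Real.continuousOn_log.mono fun x hx => (hsp hx).ne'
  have hlog_pow : ContinuousOn Real.log ((fun x : ℝ => x ^ τ) '' spectrum ℝ A) := by
    refine Real.continuousOn_log.mono ?_
    rintro _ ⟨x, hx, rfl⟩
    exact (Real.rpow_pos_of_pos (hsp hx) τ).ne'
  rw [mpow, mlog, mlog, ← cfc_comp Real.log _ A hA.1.isSelfAdjoint hlog_pow hpow,
    ← cfc_smul τ Real.log A hlog]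
  exact cfc_congr fun x hx => Real.log_rpow (hsp hx) τ

lemma frob_smul (c : ℝ) (L : Matrix (Fin n) (Fin n) ℂ) : frob (c • L) = |c| * frob L := by
  have h : (c • L) * (c • L)ᴴ = (c ^ 2 : ℝ) • (L * Lᴴ) := by
    rw [conjTranspose_smul, star_trivial, Matrix.smul_mul, Matrix.mul_smul, smul_smul, sq]
  rw [frob, frob, h, trace_smul, Complex.real_smul, Complex.re_ofReal_mul,
    Real.sqrt_mul (sq_nonneg c), Real.sqrt_sq_eq_abs]

end Matrix

theorem dg_sharp_eq_mul {n : ℕ} (M₀ M₁ : Matrix (Fin n) (Fin n) ℂ)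
    (h₀ : M₀.PosDef) (h₁ : M₁.PosDef) :
    ∀ τ ∈ Set.Icc (0 : ℝ) 1, dg M₀ (sharp M₀ M₁ τ) = τ * dg M₀ M₁ := by
  intro τ hτ
  rw [dg, h₀.minvsqrt_mul_sharp_mul_minvsqrt, (h₀.minvsqrt_mul_mul_minvsqrt h₁).mlog_mpow,
    frob_smul, abs_of_nonneg hτ.1, dg]
end

section
/- (Congruence invariance) For any n×n Hermitian positive definite complex matrices M₀, M₁ and any invertible n×n complex matrix T, d_g(T M₀ T*, T M₁ T*) = d_g(M₀, M₁), where d_g(A, B) := ‖log(A^{-1/2} B A^{-1/2})‖_Fr and T* is the conjugate transpose of T. -/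
open Matrix Set
open scoped ComplexOrder

/-!
With `A = T M₀ Tᴴ`, the matrix `U = A^{-1/2} T M₀^{1/2}` is unitary, and
`A^{-1/2} (T M₁ Tᴴ) A^{-1/2} = U (M₀^{-1/2} M₁ M₀^{-1/2}) Uᴴ`. Conjugation by a unitary is a
star-algebra automorphism, so it commutes with the functional calculus, in particular with `log`;
and the Frobenius norm is invariant under unitary conjugation.
-/

section UnitaryConj

variable {A : Type*} [Ring A] [StarRing A] [TopologicalSpace A] [IsTopologicalRing A]
  [Algebra ℝ A] [ContinuousFunctionalCalculus ℝ A IsSelfAdjoint]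
  [ContinuousMap.UniqueHom ℝ A]

theorem cfc_unitary_conj {U : A} (hU : U ∈ unitary A) (f : ℝ → ℝ) (a : A)
    (hf : ContinuousOn f (spectrum ℝ a) := by cfc_cont_tac) :
    cfc f (U * a * star U) = U * cfc f a * star U := by
  set φ := Unitary.conjStarAlgAut ℝ A ⟨U, hU⟩
  change cfc f (φ a) = φ (cfc f a)
  have hφ : Continuous φ := (continuous_const_mul _).mul continuous_const
  by_cases ha : IsSelfAdjoint a
  · exact (StarAlgHomClass.map_cfc φ f a hf hφ ha (ha.map φ)).symm
  · -- off the self-adjoint elements both sides are the junk value `0`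
    have hφa : ¬IsSelfAdjoint (φ a) := fun h ↦ ha (by simpa using h.map φ.symm)
    rw [cfc_apply_of_not_predicate a ha, cfc_apply_of_not_predicate _ hφa, map_zero]

end UnitaryConj

section Matrices

variable {n : ℕ}

theorem frob_unitary_conj {U : Matrix (Fin n) (Fin n) ℂ} (hU : U ∈ unitary _)
    (X : Matrix (Fin n) (Fin n) ℂ) : frob (U * X * star U) = frob X := by
  have hmul : (U * X * star U) * (U * X * star U)ᴴ = U * (X * Xᴴ) * star U := by
    let φ := Unitary.conjStarAlgAut ℂ _ ⟨U, hU⟩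
    change φ X * star (φ X) = φ (X * star X)
    rw [map_mul, map_star]
  rw [frob, frob, hmul, trace_mul_cycle, ← mul_assoc, Unitary.star_mul_self_of_mem hU, one_mul]

variable {M : Matrix (Fin n) (Fin n) ℂ}

section Sqrt

open scoped MatrixOrder

theorem msqrt_eq_sqrt (hM : M.PosDef) : msqrt M = CFC.sqrt M := by
  rw [CFC.sqrt_eq_real_sqrt M hM.posSemidef.nonneg, cfcₙ_eq_cfc]
  rfl

theorem msqrt_mul_self_s13 (hM : M.PosDef) : msqrt M * msqrt M = M := by
  rw [msqrt_eq_sqrt hM, CFC.sqrt_mul_sqrt_self M hM.posSemidef.nonneg]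

theorem isUnit_msqrt (hM : M.PosDef) : IsUnit (msqrt M) := by
  rw [msqrt_eq_sqrt hM, CFC.isUnit_sqrt_iff M hM.posSemidef.nonneg]
  exact hM.isUnit

end Sqrt

theorem star_msqrt (M : Matrix (Fin n) (Fin n) ℂ) : star (msqrt M) = msqrt M :=
  cfc_predicate Real.sqrt M

theorem star_minvsqrt (M : Matrix (Fin n) (Fin n) ℂ) : star (minvsqrt M) = minvsqrt M :=
  IsHermitian.inv (star_msqrt M)

theorem minvsqrt_mul_msqrt (hM : M.PosDef) : minvsqrt M * msqrt M = 1 :=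
  nonsing_inv_mul _ ((isUnit_iff_isUnit_det _).mp (isUnit_msqrt hM))

theorem msqrt_mul_minvsqrt (hM : M.PosDef) : msqrt M * minvsqrt M = 1 :=
  mul_nonsing_inv _ ((isUnit_iff_isUnit_det _).mp (isUnit_msqrt hM))

theorem minvsqrt_mul_self_mul_minvsqrt (hM : M.PosDef) : minvsqrt M * M * minvsqrt M = 1 := by
  calc minvsqrt M * M * minvsqrt M
      = minvsqrt M * (msqrt M * msqrt M) * minvsqrt M := by rw [msqrt_mul_self_s13 hM]
    _ = (minvsqrt M * msqrt M) * (msqrt M * minvsqrt M) := by simp only [mul_assoc]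
    _ = 1 := by rw [minvsqrt_mul_msqrt hM, msqrt_mul_minvsqrt hM, one_mul]

noncomputable def congrUnitary (M T : Matrix (Fin n) (Fin n) ℂ) : Matrix (Fin n) (Fin n) ℂ :=
  minvsqrt (T * M * Tᴴ) * T * msqrt M

theorem star_congrUnitary (M T : Matrix (Fin n) (Fin n) ℂ) :
    star (congrUnitary M T) = msqrt M * Tᴴ * minvsqrt (T * M * Tᴴ) := by
  rw [congrUnitary, star_mul, star_mul, star_minvsqrt, star_msqrt, star_eq_conjTranspose]
  exact (mul_assoc _ _ _).symm

theorem congrUnitary_mem_unitary {T : Matrix (Fin n) (Fin n) ℂ} (hM : M.PosDef) (hT : IsUnit T) :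
    congrUnitary M T ∈ unitary (Matrix (Fin n) (Fin n) ℂ) := by
  have hA : (T * M * Tᴴ).PosDef := (IsUnit.posDef_star_right_conjugate_iff hT).2 hM
  refine mem_unitaryGroup_iff.2 ?_
  calc congrUnitary M T * star (congrUnitary M T)
      = minvsqrt (T * M * Tᴴ) * (T * (msqrt M * msqrt M) * Tᴴ) * minvsqrt (T * M * Tᴴ) := by
        rw [star_congrUnitary, congrUnitary]; simp only [mul_assoc]
    _ = 1 := by rw [msqrt_mul_self_s13 hM, minvsqrt_mul_self_mul_minvsqrt hA]

theorem minvsqrt_conj_mul_conj_mul_minvsqrt (hM : M.PosDef) (T B : Matrix (Fin n) (Fin n) ℂ) :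
    minvsqrt (T * M * Tᴴ) * (T * B * Tᴴ) * minvsqrt (T * M * Tᴴ)
      = congrUnitary M T * (minvsqrt M * B * minvsqrt M) * star (congrUnitary M T) := by
  rw [star_congrUnitary, congrUnitary]
  calc minvsqrt (T * M * Tᴴ) * (T * B * Tᴴ) * minvsqrt (T * M * Tᴴ)
      = minvsqrt (T * M * Tᴴ) * T * ((msqrt M * minvsqrt M) * B * (minvsqrt M * msqrt M))
          * Tᴴ * minvsqrt (T * M * Tᴴ) := by
        rw [msqrt_mul_minvsqrt hM, minvsqrt_mul_msqrt hM, one_mul, mul_one]; simp only [mul_assoc]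
    _ = _ := by simp only [mul_assoc]

end Matrices

theorem dg_congruence_invariant_general {n : ℕ} (M₀ M₁ T : Matrix (Fin n) (Fin n) ℂ)
    (h₀ : M₀.PosDef) (hT : IsUnit T) :
    dg (T * M₀ * Tᴴ) (T * M₁ * Tᴴ) = dg M₀ M₁ := by
  have hU := congrUnitary_mem_unitary h₀ hT
  rw [dg, dg, mlog, mlog, minvsqrt_conj_mul_conj_mul_minvsqrt h₀,
    cfc_unitary_conj hU _ _ (finite_real_spectrum.continuousOn _), frob_unitary_conj hU]

theorem dg_congruence_invariant {n : ℕ} (M₀ M₁ T : Matrix (Fin n) (Fin n) ℂ)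
    (h₀ : M₀.PosDef) (h₁ : M₁.PosDef) (hT : IsUnit T) :
    dg (T * M₀ * Tᴴ) (T * M₁ * Tᴴ) = dg M₀ M₁ :=
  dg_congruence_invariant_general M₀ M₁ T h₀ hT
end
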